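/- For every natural number k ≥ 1 and every vector x ∈ ℝ^{k+1}, the Parseval-type identity ‖c_k x‖² + ‖d_k x‖² = ‖x‖² holds, where ‖·‖ denotes the Euclidean norm. -/

import Mathlib

/-!
Both `c_k` and `d_k` are bidiagonal with the same diagonal `a` and opposite superdiagonals `±b`,
so by the parallelogram law `(p + q)² + (p - q)² = 2(p² + q²)` row `β` contributes
`2 (a_β² x_β² + b_β² x_{β+1}²) = ((k - β) x_β² + (β + 1) x_{β+1}²) / k`.
Summed over `β`, each `x_α²` receives total weight `((k - α) + α) / k = 1`.
-/

open Matrix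

/-- The `k × (k+1)` lowering matrix `c_k`, with entries
`c_k[β,β] = √(k−β)/√(2k)`, `c_k[β,β+1] = √(β+1)/√(2k)`, and `0` otherwise. -/
noncomputable def cmat (k : ℕ) : Matrix (Fin k) (Fin (k+1)) ℝ :=
  fun β α =>
    if (α : ℕ) = (β : ℕ) then Real.sqrt ((k : ℝ) - (β : ℕ)) / Real.sqrt (2 * (k : ℝ))
    else if (α : ℕ) = (β : ℕ) + 1 then Real.sqrt (((β : ℕ) : ℝ) + 1) / Real.sqrt (2 * (k : ℝ))
    else 0

/-- The `k × (k+1)` lowering matrix `d_k`, with entries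
`d_k[β,β] = √(k−β)/√(2k)`, `d_k[β,β+1] = −√(β+1)/√(2k)`, and `0` otherwise. -/
noncomputable def dmat (k : ℕ) : Matrix (Fin k) (Fin (k+1)) ℝ :=
  fun β α =>
    if (α : ℕ) = (β : ℕ) then Real.sqrt ((k : ℝ) - (β : ℕ)) / Real.sqrt (2 * (k : ℝ))
    else if (α : ℕ) = (β : ℕ) + 1 then -Real.sqrt (((β : ℕ) : ℝ) + 1) / Real.sqrt (2 * (k : ℝ))
    else 0

namespace Matrix

variable {R : Type*} {k : ℕ}

def bidiagonal [Zero R] (a b : Fin k → R) : Matrix (Fin k) (Fin (k + 1)) R :=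
  fun β α => if α = β.castSucc then a β else if α = β.succ then b β else 0

theorem bidiagonal_mulVec [NonUnitalNonAssocSemiring R] (a b : Fin k → R)
    (v : Fin (k + 1) → R) (β : Fin k) :
    (bidiagonal a b *ᵥ v) β = a β * v β.castSucc + b β * v β.succ := by
  rw [mulVec, dotProduct, Fintype.sum_eq_add β.castSucc β.succ (Fin.castSucc_lt_succ).ne]
  · simp [bidiagonal, (Fin.castSucc_lt_succ (i := β)).ne']
  · rintro α ⟨h₁, h₂⟩
    simp [bidiagonal, h₁, h₂]

theorem sum_sq_bidiagonal_mulVec_add_neg [CommRing R] (a b : Fin k → R)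
    (v : Fin (k + 1) → R) :
    ∑ β, (bidiagonal a b *ᵥ v) β ^ 2 + ∑ β, (bidiagonal a (-b) *ᵥ v) β ^ 2 =
      2 * ∑ β, (a β ^ 2 * v β.castSucc ^ 2 + b β ^ 2 * v β.succ ^ 2) := by
  simp only [bidiagonal_mulVec, Pi.neg_apply, ← Finset.sum_add_distrib, Finset.mul_sum]
  congr 1 with β
  ring

end Matrix

theorem Fin.sum_weighted_castSucc_add_succ {R : Type*} [CommRing R] (k : ℕ)
    (f : Fin (k + 1) → R) :
    ∑ β : Fin k, (((k : R) - β) * f β.castSucc + ((β : R) + 1) * f β.succ) =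
      k * ∑ α, f α := by
  have hweights : ∑ α : Fin (k + 1), (((k : R) - α) * f α + (α : R) * f α) = k * ∑ α, f α := by
    simp only [← add_mul, sub_add_cancel, Finset.mul_sum]
  rw [← hweights, Finset.sum_add_distrib, Finset.sum_add_distrib,
    Fin.sum_univ_castSucc (fun α => ((k : R) - α) * f α),
    Fin.sum_univ_succ (fun α => (α : R) * f α)]
  simp

theorem cmat_eq_bidiagonal (k : ℕ) :
    cmat k = bidiagonal (fun β => √((k : ℝ) - β) / √(2 * k))
      (fun β => √((β : ℝ) + 1) / √(2 * k)) := by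
  ext β α
  simp [cmat, bidiagonal, Fin.ext_iff]

theorem dmat_eq_bidiagonal (k : ℕ) :
    dmat k = bidiagonal (fun β => √((k : ℝ) - β) / √(2 * k))
      (-fun β : Fin k => √((β : ℝ) + 1) / √(2 * k)) := by
  ext β α
  simp [dmat, bidiagonal, Fin.ext_iff, neg_div]

/-- Parseval-type identity: for `k ≥ 1` and any `x ∈ ℝ^{k+1}`,
`‖c_k x‖² + ‖d_k x‖² = ‖x‖²` in the Euclidean norm. -/
theorem parseval_cmat_dmat (k : ℕ) (hk : 1 ≤ k) (x : EuclideanSpace ℝ (Fin (k+1))) :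
    ‖(WithLp.equiv 2 (Fin k → ℝ)).symm (cmat k *ᵥ (WithLp.equiv 2 (Fin (k+1) → ℝ)) x)‖ ^ 2 +
      ‖(WithLp.equiv 2 (Fin k → ℝ)).symm (dmat k *ᵥ (WithLp.equiv 2 (Fin (k+1) → ℝ)) x)‖ ^ 2
      = ‖x‖ ^ 2 := by
  have hk₀ : (k : ℝ) ≠ 0 := Nat.cast_ne_zero.mpr (Nat.one_le_iff_ne_zero.mp hk)
  have hsq (β : Fin k) : √((k : ℝ) - β) ^ 2 = k - β := Real.sq_sqrt (by simp [β.isLt.le])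
  simp only [EuclideanSpace.real_norm_sq_eq, WithLp.equiv_symm_apply, WithLp.equiv_apply,
    cmat_eq_bidiagonal, dmat_eq_bidiagonal, sum_sq_bidiagonal_mulVec_add_neg, div_pow, hsq]
  rw [← inv_mul_cancel_left₀ hk₀ (∑ α, x α ^ 2), ← Fin.sum_weighted_castSucc_add_succ,
    Finset.mul_sum, Finset.mul_sum]
  congr 1 with β
  rw [Real.sq_sqrt (by positivity), Real.sq_sqrt (by positivity)]
  field_simp
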